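/- If h(t) = Π_{j=0}^{n−1} p_{j+1}^{t_{j+1}} (1−p_{j+1})^{1−t_{j+1}} with p_{j+1} = P(T_{j+1}=1 | N_1(j)=m_j(t), N_1(n)=n_1) defined via Theorem 2.1, then h is exactly the conditional probability mass function of T given N_1(n)=n_1: for every t ∈ {0,1}^n with Σ t_i = n_1, h(t) = P(T = t)/P(N_1(n)=n_1), and Σ_{t: Σt_i=n_1} h(t) = 1. -/

import Mathlib

open Finset

/-- Number of treatment-1 assignments among the first `j` patients. -/
def count1 {n : ℕ} (t : Fin n → Bool) (j : ℕ) : ℕ :=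
  ((Finset.univ : Finset (Fin n)).filter (fun i : Fin n => (i : ℕ) < j ∧ t i = true)).card

/-- Probability of an assignment sequence under the restricted randomization
procedure `φ`, where `φ j m = P(T_{j+1} = 1 | N_1(j) = m)`. -/
noncomputable def seqProb {n : ℕ} (φ : ℕ → ℕ → ℝ) (t : Fin n → Bool) : ℝ :=
  ∏ i : Fin n,
    if t i = true then φ (i : ℕ) (count1 t (i : ℕ)) else 1 - φ (i : ℕ) (count1 t (i : ℕ))

open Classical in
/-- Probability of an event under the randomization procedure `φ`. -/
noncomputable def pr {n : ℕ} (φ : ℕ → ℕ → ℝ) (S : Set (Fin n → Bool)) : ℝ :=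
  ∑ t : Fin n → Bool, if t ∈ S then seqProb φ t else 0

/-- Conditional probability `P(A | B)` under the randomization procedure `φ`. -/
noncomputable def condPr {n : ℕ} (φ : ℕ → ℕ → ℝ) (A B : Set (Fin n → Bool)) : ℝ :=
  pr φ (A ∩ B) / pr φ B

/-!
Write `A = {N_1(n) = n_1}` and let `J_j` be the probability of `A` together with agreement with
`t` on the first `j` patients. The count process is Markov, so
`J_j = P(T_1..T_j = t_1..t_j) g_j(m_j)` and `P(A | N_1(j) = m) = g_j(m)`, where
`g_j(m) = φ_j(m) g_{j+1}(m+1) + (1 - φ_j(m)) g_{j+1}(m)` is computed by backward recursion.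
Hence the `j`-th factor of `h(t)` multiplies `J_j` into `J_{j+1}` (trivially when `J_j = 0`, as
`J` is decreasing), and the product telescopes from `J_0 = P(A)` to `J_n = P(T = t)`.
-/

section

variable {n : ℕ}

lemma filter_val_lt_succ {j : ℕ} (hj : j < n) :
    univ.filter (fun i : Fin n => (i : ℕ) < j + 1)
      = insert ⟨j, hj⟩ (univ.filter fun i : Fin n => (i : ℕ) < j) := by
  ext i
  simp only [mem_filter, mem_univ, true_and, mem_insert, Fin.ext_iff]
  omega

@[to_additive]
lemma prod_filter_val_lt_succ {M : Type*} [CommMonoid M] (f : Fin n → M) {j : ℕ} (hj : j < n) :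
    ∏ i ∈ univ.filter (fun i : Fin n => (i : ℕ) < j + 1), f i
      = (∏ i ∈ univ.filter (fun i : Fin n => (i : ℕ) < j), f i) * f ⟨j, hj⟩ := by
  rw [filter_val_lt_succ hj, prod_insert (by simp), mul_comm]

lemma count1_eq_sum (t : Fin n → Bool) (j : ℕ) :
    count1 t j = ∑ i ∈ univ.filter (fun i : Fin n => (i : ℕ) < j), (t i).toNat := by
  rw [count1, ← filter_filter, card_filter]
  exact sum_congr rfl fun i _ => by cases t i <;> rfl

lemma count1_zero (t : Fin n → Bool) : count1 t 0 = 0 := by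
  simp [count1]

lemma count1_succ (t : Fin n → Bool) {j : ℕ} (hj : j < n) :
    count1 t (j + 1) = count1 t j + (t ⟨j, hj⟩).toNat := by
  simp only [count1_eq_sum, sum_filter_val_lt_succ _ hj]

def cylinder (t : Fin n → Bool) (j : ℕ) : Set (Fin n → Bool) :=
  {s | ∀ i : Fin n, (i : ℕ) < j → s i = t i}

/-- The canonical representative of `cylinder t j`. -/
def truncate (j : ℕ) (t : Fin n → Bool) : Fin n → Bool :=
  fun i => if (i : ℕ) < j then t i else false

variable {s t : Fin n → Bool} {j : ℕ}

lemma mem_cylinder_iff_truncate : s ∈ cylinder t j ↔ truncate j s = truncate j t := by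
  simp only [cylinder, Set.mem_ofPred_eq, truncate, funext_iff]
  exact forall_congr' fun i => by by_cases hi : (i : ℕ) < j <;> simp [hi]

lemma truncate_truncate : truncate j (truncate j t) = truncate j t := by
  funext i
  simp [truncate]

lemma cylinder_zero (t : Fin n → Bool) : cylinder t 0 = Set.univ := by
  simp [cylinder]

lemma cylinder_self_length (t : Fin n → Bool) : cylinder t n = {t} := by
  ext s
  simp [cylinder, funext_iff]

lemma cylinder_succ_subset : cylinder t (j + 1) ⊆ cylinder t j :=
  fun _ hs i hi => hs i (by omega)

lemma mem_cylinder_update_succ (hj : j < n) (b : Bool) :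
    s ∈ cylinder (Function.update t ⟨j, hj⟩ b) (j + 1)
      ↔ s ∈ cylinder t j ∧ s ⟨j, hj⟩ = b := by
  simp only [cylinder, Set.mem_ofPred_eq, Function.update_apply, Fin.ext_iff]
  constructor
  · intro hs
    refine ⟨fun i hi => ?_, by simpa using hs ⟨j, hj⟩ (by simp)⟩
    simpa [hi.ne] using hs i (by omega)
  · rintro ⟨hs, rfl⟩ i hi
    split_ifs with h
    · rw [show i = ⟨j, hj⟩ from Fin.ext h]
    · exact hs i (by omega)

lemma update_mem_cylinder (hj : j < n) (b : Bool) :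
    Function.update t ⟨j, hj⟩ b ∈ cylinder t j :=
  fun i hi => Function.update_of_ne (fun h => by simp [h] at hi) _ _

lemma count1_eq_of_mem_cylinder (hs : s ∈ cylinder t j) : count1 s j = count1 t j := by
  unfold count1
  congr 1
  exact filter_congr fun i _ => and_congr_right fun hi => by rw [hs i hi]

lemma count1_update_succ (hj : j < n) (b : Bool) :
    count1 (Function.update t ⟨j, hj⟩ b) (j + 1) = count1 t j + b.toNat := by
  rw [count1_succ _ hj, count1_eq_of_mem_cylinder (update_mem_cylinder hj b),
    Function.update_self]

variable (φ : ℕ → ℕ → ℝ)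

def stepProb (j m : ℕ) (b : Bool) : ℝ :=
  if b then φ j m else 1 - φ j m

def prefixProb (t : Fin n → Bool) (j : ℕ) : ℝ :=
  ∏ i ∈ univ.filter (fun i : Fin n => (i : ℕ) < j), stepProb φ i (count1 t i) (t i)

lemma prefixProb_zero : prefixProb φ t 0 = 1 := by
  simp [prefixProb]

lemma prefixProb_length : prefixProb φ t n = seqProb φ t := by
  simp [prefixProb, seqProb, stepProb]

lemma prefixProb_succ (hj : j < n) :
    prefixProb φ t (j + 1) = prefixProb φ t j * stepProb φ j (count1 t j) (t ⟨j, hj⟩) :=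
  prod_filter_val_lt_succ _ hj

lemma prefixProb_eq_of_mem_cylinder (hs : s ∈ cylinder t j) :
    prefixProb φ s j = prefixProb φ t j := by
  refine prod_congr rfl fun i hi => ?_
  have hij : (i : ℕ) < j := (mem_filter.mp hi).2
  rw [hs i hij, count1_eq_of_mem_cylinder fun k hk => hs k (hk.trans hij)]

lemma prefixProb_update_succ (hj : j < n) (b : Bool) :
    prefixProb φ (Function.update t ⟨j, hj⟩ b) (j + 1)
      = prefixProb φ t j * stepProb φ j (count1 t j) b := by
  rw [prefixProb_succ φ hj, prefixProb_eq_of_mem_cylinder φ (update_mem_cylinder hj b),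
    count1_eq_of_mem_cylinder (update_mem_cylinder hj b), Function.update_self]

/-- `expectFinal φ ψ d j m = E[ψ(N_1(j + d)) | N_1(j) = m]`. -/
def expectFinal (ψ : ℕ → ℝ) : ℕ → ℕ → ℕ → ℝ
  | 0, _, m => ψ m
  | d + 1, j, m => ∑ b : Bool, stepProb φ j m b * expectFinal ψ d (j + 1) (m + b.toNat)

lemma expectFinal_succ (ψ : ℕ → ℝ) (d j m : ℕ) :
    expectFinal φ ψ (d + 1) j m
      = φ j m * expectFinal φ ψ d (j + 1) (m + 1)
        + (1 - φ j m) * expectFinal φ ψ d (j + 1) m := by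
  simp [expectFinal, stepProb]

lemma expectFinal_one (d j m : ℕ) : expectFinal φ 1 d j m = 1 := by
  induction d generalizing j m with
  | zero => rfl
  | succ d ih => simp [expectFinal_succ, ih]

/-- `hitProb φ n1 d j m = P(N_1(j + d) = n1 | N_1(j) = m)`. -/
def hitProb (n1 d j m : ℕ) : ℝ :=
  expectFinal φ (fun k => if k = n1 then 1 else 0) d j m

lemma hitProb_succ (n1 d j m : ℕ) :
    hitProb φ n1 (d + 1) j m
      = φ j m * hitProb φ n1 d (j + 1) (m + 1) + (1 - φ j m) * hitProb φ n1 d (j + 1) m :=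
  expectFinal_succ φ _ d j m

lemma sum_indicator_cylinder (ψ : ℕ → ℝ) {d : ℕ} (hjd : j + d = n) (t : Fin n → Bool) :
    ∑ s, (cylinder t j).indicator (fun s => ψ (count1 s n) * seqProb φ s) s
      = prefixProb φ t j * expectFinal φ ψ d j (count1 t j) := by
  induction d generalizing j t with
  | zero =>
    subst hjd
    simp [cylinder_self_length, prefixProb_length, expectFinal, mul_comm]
  | succ d ih =>
    have hj : j < n := by omega
    have hsplit : ∀ s, (cylinder t j).indicator (fun s => ψ (count1 s n) * seqProb φ s) s
        = ∑ b : Bool, (cylinder (Function.update t ⟨j, hj⟩ b) (j + 1)).indicator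
            (fun s => ψ (count1 s n) * seqProb φ s) s := by
      intro s
      classical
      simp only [Set.indicator_apply, mem_cylinder_update_succ hj, Fintype.sum_bool]
      cases s ⟨j, hj⟩ <;> simp
    rw [sum_congr rfl fun s _ => hsplit s, sum_comm]
    simp only [ih (by omega : j + 1 + d = n), prefixProb_update_succ φ hj, count1_update_succ hj,
      expectFinal, mul_sum, mul_assoc]

variable {φ}

lemma seqProb_nonneg (hφ : ∀ j m, 0 ≤ φ j m ∧ φ j m ≤ 1) (t : Fin n → Bool) :
    0 ≤ seqProb φ t :=
  prod_nonneg fun i _ => by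
    split_ifs
    · exact (hφ _ _).1
    · linarith [(hφ i (count1 t i)).2]

lemma pr_eq_sum_indicator (S : Set (Fin n → Bool)) :
    pr φ S = ∑ s, S.indicator (seqProb φ) s := by
  classical
  simp [pr, Set.indicator_apply]

lemma pr_setOf (P : (Fin n → Bool) → Prop) [DecidablePred P] :
    pr φ {s | P s} = ∑ s, if P s then seqProb φ s else 0 :=
  sum_congr rfl fun s _ => by by_cases hs : P s <;> simp [hs]

lemma pr_empty : pr φ (∅ : Set (Fin n → Bool)) = 0 := by
  simp [pr]

lemma pr_singleton (t : Fin n → Bool) : pr φ {t} = seqProb φ t := by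
  simp [pr]

lemma pr_nonneg (hφ : ∀ j m, 0 ≤ φ j m ∧ φ j m ≤ 1) (S : Set (Fin n → Bool)) :
    0 ≤ pr φ S := by
  rw [pr_eq_sum_indicator]
  exact sum_nonneg fun s _ => Set.indicator_nonneg (fun s _ => seqProb_nonneg hφ s) s

lemma pr_mono (hφ : ∀ j m, 0 ≤ φ j m ∧ φ j m ≤ 1) {S T : Set (Fin n → Bool)}
    (hST : S ⊆ T) : pr φ S ≤ pr φ T := by
  simp only [pr_eq_sum_indicator]
  exact sum_le_sum fun s _ =>
    Set.indicator_le_indicator_of_subset hST (fun s => seqProb_nonneg hφ s) s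

lemma pr_cylinder (t : Fin n → Bool) (hj : j ≤ n) :
    pr φ (cylinder t j) = prefixProb φ t j := by
  have h := sum_indicator_cylinder φ 1 (j := j) (d := n - j) (by omega) t
  simpa [expectFinal_one, pr_eq_sum_indicator] using h

lemma pr_univ : pr φ (Set.univ : Set (Fin n → Bool)) = 1 := by
  rw [← cylinder_zero (fun _ => false), pr_cylinder _ (Nat.zero_le n), prefixProb_zero]

lemma condPr_univ (A : Set (Fin n → Bool)) : condPr φ A Set.univ = pr φ A := by
  rw [condPr, Set.inter_univ, pr_univ, div_one]

lemma pr_count_inter_cylinder (n1 : ℕ) {d : ℕ} (hjd : j + d = n) (t : Fin n → Bool) :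
    pr φ ({s | count1 s n = n1} ∩ cylinder t j)
      = prefixProb φ t j * hitProb φ n1 d j (count1 t j) := by
  classical
  rw [hitProb, ← sum_indicator_cylinder φ _ hjd t, pr]
  refine sum_congr rfl fun s _ => ?_
  by_cases hs : s ∈ cylinder t j <;> by_cases hn1 : count1 s n = n1 <;> simp [hs, hn1]

lemma pr_eq_sum_truncate (S : Set (Fin n → Bool)) (j : ℕ) :
    pr φ S = ∑ p, if truncate j p = p then pr φ (S ∩ cylinder p j) else 0 := by
  classical
  rw [pr, ← sum_fiberwise univ (truncate j)]
  refine sum_congr rfl fun p _ => ?_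
  split_ifs with hp
  · rw [pr, sum_filter]
    refine sum_congr rfl fun s _ => ?_
    have hfiber : truncate j s = p ↔ s ∈ cylinder p j := by rw [mem_cylinder_iff_truncate, hp]
    by_cases hs : s ∈ cylinder p j <;> simp [hs, hfiber]
  · refine sum_eq_zero fun s hs => absurd ?_ hp
    rw [← (mem_filter.mp hs).2, truncate_truncate]

lemma pr_count_inter_count (n1 : ℕ) {d : ℕ} (hjd : j + d = n) (m : ℕ) :
    pr φ ({s : Fin n → Bool | count1 s n = n1} ∩ {s | count1 s j = m})
      = pr φ {s : Fin n → Bool | count1 s j = m} * hitProb φ n1 d j m := by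
  rw [pr_eq_sum_truncate _ j, pr_eq_sum_truncate {s : Fin n → Bool | count1 s j = m} j, sum_mul]
  refine sum_congr rfl fun p _ => ?_
  split_ifs
  · rw [Set.inter_assoc]
    by_cases hp : count1 p j = m
    · have hsub : cylinder p j ⊆ {s | count1 s j = m} :=
        fun s hs => (count1_eq_of_mem_cylinder hs).trans hp
      rw [Set.inter_eq_right.mpr hsub, pr_cylinder p (by omega),
        pr_count_inter_cylinder n1 hjd p, hp]
    · have hdisj : {s | count1 s j = m} ∩ cylinder p j = ∅ :=
        Set.eq_empty_iff_forall_notMem.mpr fun s ⟨hs, hc⟩ =>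
          hp ((count1_eq_of_mem_cylinder hc).symm.trans hs)
      rw [hdisj, Set.inter_empty, pr_empty, zero_mul]
  · rw [zero_mul]

lemma condPr_count_count (n1 : ℕ) {d : ℕ} (hjd : j + d = n) {m : ℕ}
    (hm : pr φ {s : Fin n → Bool | count1 s j = m} ≠ 0) :
    condPr φ {s : Fin n → Bool | count1 s n = n1} {s | count1 s j = m}
      = hitProb φ n1 d j m := by
  rw [condPr, pr_count_inter_count n1 hjd, mul_div_cancel_left₀ _ hm]

lemma pr_count_ne_zero_of_prefixProb_ne_zero (hφ : ∀ j m, 0 ≤ φ j m ∧ φ j m ≤ 1)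
    (hj : j ≤ n) (hP : prefixProb φ t j ≠ 0) :
    pr φ {s : Fin n → Bool | count1 s j = count1 t j} ≠ 0 := by
  rw [← pr_cylinder t hj] at hP
  exact (lt_of_lt_of_le ((pr_nonneg hφ _).lt_of_ne' hP)
    (pr_mono hφ fun _ hs => count1_eq_of_mem_cylinder hs)).ne'

lemma samplingRule_eq_of_pr_ne_zero (hφ : ∀ j m, 0 ≤ φ j m ∧ φ j m ≤ 1) (n1 : ℕ)
    (t : Fin n → Bool) {d : ℕ} (hjd : j + 1 + d = n)
    (hzero : pr φ ({s | count1 s n = n1} ∩ cylinder t j) ≠ 0) :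
    φ j (count1 t j)
        * condPr φ {s : Fin n → Bool | count1 s n = n1} {s | count1 s (j + 1) = count1 t j + 1}
        / condPr φ {s : Fin n → Bool | count1 s n = n1} {s | count1 s j = count1 t j}
      = φ j (count1 t j) * hitProb φ n1 d (j + 1) (count1 t j + 1)
        / hitProb φ n1 (d + 1) j (count1 t j) := by
  have hj : j < n := by omega
  rw [pr_count_inter_cylinder n1 (d := d + 1) (by omega)] at hzero
  have hP : prefixProb φ t j ≠ 0 := left_ne_zero_of_mul hzero
  rw [condPr_count_count n1 (d := d + 1) (by omega)
    (pr_count_ne_zero_of_prefixProb_ne_zero hφ hj.le hP)]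
  rcases eq_or_ne (φ j (count1 t j)) 0 with hφ0 | hφ0
  · simp [hφ0]
  have hPupd : prefixProb φ (Function.update t ⟨j, hj⟩ true) (j + 1) ≠ 0 := by
    rw [prefixProb_update_succ φ hj]
    exact mul_ne_zero hP hφ0
  have hnum := pr_count_ne_zero_of_prefixProb_ne_zero hφ hj hPupd
  rw [count1_update_succ hj, Bool.toNat_true] at hnum
  rw [condPr_count_count n1 hjd hnum]

lemma samplingFactor_mul_pr_inter_cylinder (hφ : ∀ j m, 0 ≤ φ j m ∧ φ j m ≤ 1) (n1 : ℕ)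
    (t : Fin n → Bool) (hj : j < n) {p : ℝ}
    (hp : p = φ j (count1 t j)
        * condPr φ {s : Fin n → Bool | count1 s n = n1} {s | count1 s (j + 1) = count1 t j + 1}
        / condPr φ {s : Fin n → Bool | count1 s n = n1} {s | count1 s j = count1 t j}) :
    (if t ⟨j, hj⟩ = true then p else 1 - p) * pr φ ({s | count1 s n = n1} ∩ cylinder t j)
      = pr φ ({s | count1 s n = n1} ∩ cylinder t (j + 1)) := by
  obtain ⟨d, hjd⟩ : ∃ d, j + 1 + d = n := ⟨n - (j + 1), by omega⟩
  by_cases hzero : pr φ ({s | count1 s n = n1} ∩ cylinder t j) = 0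
  · have hnext : pr φ ({s | count1 s n = n1} ∩ cylinder t (j + 1)) = 0 :=
      le_antisymm (hzero ▸ pr_mono hφ (Set.inter_subset_inter_right _ cylinder_succ_subset))
        (pr_nonneg hφ _)
    rw [hzero, hnext, mul_zero]
  rw [hp, samplingRule_eq_of_pr_ne_zero hφ n1 t hjd hzero]
  rw [pr_count_inter_cylinder n1 (d := d + 1) (by omega)] at hzero ⊢
  rw [pr_count_inter_cylinder n1 hjd, prefixProb_succ φ hj, count1_succ t hj]
  have hg := right_ne_zero_of_mul hzero
  rw [hitProb_succ] at hg ⊢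
  cases t ⟨j, hj⟩
  · simp only [stepProb, Bool.false_eq_true, if_false, Bool.toNat_false, add_zero]
    field_simp
    ring
  · simp only [stepProb, if_true, Bool.toNat_true]
    field_simp

lemma prod_samplingFactor_mul_pr (hφ : ∀ j m, 0 ≤ φ j m ∧ φ j m ≤ 1) {n1 : ℕ}
    (ht : count1 t n = n1) (p : ℕ → ℝ)
    (hp : ∀ j < n, p j = φ j (count1 t j)
        * condPr φ {s : Fin n → Bool | count1 s n = n1} {s | count1 s (j + 1) = count1 t j + 1}
        / condPr φ {s : Fin n → Bool | count1 s n = n1} {s | count1 s j = count1 t j}) :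
    (∏ i : Fin n, if t i = true then p i else 1 - p i)
        * pr φ {s : Fin n → Bool | count1 s n = n1}
      = seqProb φ t := by
  have htelescope : ∀ j ≤ n,
      (∏ i ∈ univ.filter (fun i : Fin n => (i : ℕ) < j), if t i = true then p i else 1 - p i)
        * pr φ {s : Fin n → Bool | count1 s n = n1}
        = pr φ ({s | count1 s n = n1} ∩ cylinder t j) := by
    intro j hj
    induction j with
    | zero => simp [cylinder_zero]
    | succ j ih =>
      rw [prod_filter_val_lt_succ _ hj, mul_right_comm, ih (by omega), mul_comm]
      exact samplingFactor_mul_pr_inter_cylinder hφ n1 t hj (hp j hj)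
  have ht' : t ∈ {s : Fin n → Bool | count1 s n = n1} := ht
  have hfull := htelescope n le_rfl
  rwa [filter_true_of_mem fun i _ => i.isLt, cylinder_self_length,
    Set.inter_singleton_of_mem ht', pr_singleton] at hfull

end

/-- the sampling rule of Theorem 2.1 produces exactly the
conditional pmf of `T` given `N_1(n)=n_1`: with
`p_{j+1} = φ_{j+1}(m_j)·P(N_1(n)=n_1|N_1(j+1)=m_j+1)/P(N_1(n)=n_1|N_1(j)=m_j)`
(and `p_1 = φ_1(0)·P(N_1(n)=n_1|T_1=1)/P(N_1(n)=n_1)`),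
`h(t) = Π_j p_{j+1}^{t_{j+1}}(1−p_{j+1})^{1−t_{j+1}}` satisfies
`h(t) = P(T=t)/P(N_1(n)=n_1)` for each `t` with `Σ t_i = n_1`, and sums to 1
over the conditional reference set. -/
theorem cond_pmf_of_sampling_rule (n : ℕ) (hn : 1 ≤ n) (φ : ℕ → ℕ → ℝ)
    (hφ : ∀ j m, 0 ≤ φ j m ∧ φ j m ≤ 1) (n1 : ℕ)
    (hpos : 0 < pr φ {t : Fin n → Bool | count1 t n = n1})
    (pstep : (Fin n → Bool) → ℕ → ℝ)
    (hpstep0 : ∀ t : Fin n → Bool, pstep t 0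
        = φ 0 0
            * condPr φ {s : Fin n → Bool | count1 s n = n1}
                {s : Fin n → Bool | s ⟨0, by omega⟩ = true}
            / pr φ {s : Fin n → Bool | count1 s n = n1})
    (hpstep : ∀ t : Fin n → Bool, ∀ j, 1 ≤ j → j ≤ n - 1 → pstep t j
        = φ j (count1 t j)
            * condPr φ {s : Fin n → Bool | count1 s n = n1}
                {s : Fin n → Bool | count1 s (j + 1) = count1 t j + 1}
            / condPr φ {s : Fin n → Bool | count1 s n = n1}
                {s : Fin n → Bool | count1 s j = count1 t j})
    (h : (Fin n → Bool) → ℝ)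
    (hh : ∀ t : Fin n → Bool, h t
        = ∏ i : Fin n, if t i = true then pstep t (i : ℕ) else 1 - pstep t (i : ℕ)) :
    (∀ t : Fin n → Bool, count1 t n = n1 →
        h t = seqProb φ t / pr φ {s : Fin n → Bool | count1 s n = n1})
    ∧ (∑ t : Fin n → Bool, if count1 t n = n1 then h t else 0) = 1 := by
  have hfirst :
      {s : Fin n → Bool | s ⟨0, by omega⟩ = true} = {s | count1 s (0 + 1) = 0 + 1} := by
    ext s
    simp [count1_succ s hn, count1_zero]
  have hstart (t : Fin n → Bool) : {s : Fin n → Bool | count1 s 0 = count1 t 0} = Set.univ := by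
    simp [count1_zero]
  have hrule (t : Fin n → Bool) (j : ℕ) (hj : j < n) : pstep t j = φ j (count1 t j)
      * condPr φ {s : Fin n → Bool | count1 s n = n1} {s | count1 s (j + 1) = count1 t j + 1}
      / condPr φ {s : Fin n → Bool | count1 s n = n1} {s | count1 s j = count1 t j} := by
    rcases Nat.eq_zero_or_pos j with rfl | hj0
    · rw [hpstep0, hstart, condPr_univ, hfirst, count1_zero]
    · exact hpstep t j hj0 (by omega)
  have hcond (t : Fin n → Bool) (ht : count1 t n = n1) :
      h t * pr φ {s : Fin n → Bool | count1 s n = n1} = seqProb φ t := by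
    rw [hh]
    exact prod_samplingFactor_mul_pr hφ ht (pstep t) (hrule t)
  refine ⟨fun t ht => by rw [eq_div_iff hpos.ne', hcond t ht], ?_⟩
  calc (∑ t : Fin n → Bool, if count1 t n = n1 then h t else 0)
      = (∑ t : Fin n → Bool, if count1 t n = n1 then seqProb φ t else 0)
          / pr φ {s : Fin n → Bool | count1 s n = n1} := by
        rw [sum_div]
        refine sum_congr rfl fun t _ => ?_
        split_ifs with ht
        · rw [eq_div_iff hpos.ne', hcond t ht]
        · rw [zero_div]
    _ = 1 := by rw [← pr_setOf, div_self hpos.ne']
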